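/- Let n, k be positive integers and r a nonnegative integer with n > 2k and k − 1 = (n−2k)r. Then for every vertex A of the Kneser graph K_{n,k}, the (2r+1)-fold neighborhood N_{2r+1}(A) equals V(K_{n,k}) \ {A}. -/

import Mathlib

open SimpleGraph

/-- The `r`-fold neighborhood: `nbhd G 0 v = {v}`, `nbhd G (r+1) v = ⋃_{w ∈ nbhd G r v} N(w)`. -/
def nbhd {V : Type*} (G : SimpleGraph V) : ℕ → V → Set V
  | 0, v => {v}
  | r+1, v => {y | ∃ w ∈ nbhd G r v, G.Adj w y}

/-- The Kneser graph on `k`-subsets of `[n]`. -/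
def kneser (n k : ℕ) : SimpleGraph {A : Finset (Fin n) // A.card = k} where
  Adj A B := A ≠ B ∧ Disjoint A.1 B.1
  symm := by constructor; rintro A B ⟨h1, h2⟩; exact ⟨h1.symm, h2.symm⟩
  loopless := by constructor; rintro A ⟨h, _⟩; exact h rfl

/-- The odd girth of a graph, as an extended natural number. -/
noncomputable def oddGirth {V : Type*} (G : SimpleGraph V) : ℕ∞ :=
  sInf ((↑) '' {l : ℕ | Odd l ∧ ∃ v : V, ∃ w : G.Walk v v, w.length = l})

/-- The cycle graph on `ZMod m`. -/
def cyc (m : ℕ) : SimpleGraph (ZMod m) where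
  Adj x y := x ≠ y ∧ (y = x + 1 ∨ x = y + 1)
  symm := by constructor; rintro x y ⟨h1, h2⟩; exact ⟨h1.symm, h2.symm⟩
  loopless := ⟨fun x h => h.1 rfl⟩

/-- The `r`-neighborhood complex of `G`, as a set of finite subsets of vertices. -/
def nComplex {V : Type*} (G : SimpleGraph V) (r : ℕ) : Set (Finset V) :=
  {σ | ∃ v : V, ↑σ ⊆ nbhd G r v}

/-!
Write `d = n - 2k`. Two steps along the Kneser graph, `D — C — B`, put `D` and `B` inside the
complement of `C`, which has `n - k = k + d` elements, so `|A ∩ D| ≤ |A ∩ B| + d`. Hence every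
`B ∈ N_{2i}(A)` meets `A` in at least `k - i d` points, and `A ∉ N_{2r+1}(A)` as soon as
`r d < k`, since the last step before returning to `A` must leave `A` entirely.
Conversely, two steps suffice to trade `d` points of `A ∩ B` for fresh points outside `A ∪ B`,
so `|A ∩ B| ≤ i d` puts `B` in `N_{2i+1}(A)`; when `k - 1 = r d` this covers every `B ≠ A`.
-/

open Finset

section FinsetCounting

variable {α : Type*} [DecidableEq α]

lemma Finset.card_sdiff_add_card_add_card_le [Fintype α] {B C D : Finset α} (hB : Disjoint B C)
    (hD : Disjoint D C) : #(D \ B) + #B + #C ≤ Fintype.card α := by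
  have hDB : Disjoint (D ∪ B) C := disjoint_union_left.2 ⟨hD, hB⟩
  rw [card_sdiff_add_card, ← card_union_of_disjoint hDB]
  exact card_le_univ _

lemma Finset.card_inter_le_card_inter_add_card_sdiff (A B D : Finset α) :
    #(A ∩ D) ≤ #(A ∩ B) + #(D \ B) := by
  calc #(A ∩ D) ≤ #((A ∩ B) ∪ (D \ B)) := card_le_card fun x hx => by
        simp only [mem_inter, mem_union, mem_sdiff] at hx ⊢; tauto
    _ ≤ #(A ∩ B) + #(D \ B) := card_union_le _ _

lemma Finset.exists_card_eq_disjoint [Fintype α] {s : Finset α} {k : ℕ}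
    (h : #s + k ≤ Fintype.card α) :
    ∃ t : Finset α, #t = k ∧ Disjoint t s := by
  obtain ⟨t, hts, ht⟩ := exists_subset_card_eq (s := sᶜ) (n := k) (by rw [card_compl]; omega)
  exact ⟨t, ht, disjoint_of_subset_left hts disjoint_compl_left⟩

/-- Replace `min d #(A ∩ B)` points of `A ∩ B` in `B` by points outside `A ∪ B`. -/
lemma Finset.exists_card_inter_le_sub [Fintype α] {A B : Finset α} {d : ℕ}
    (h : #A + #B + d ≤ Fintype.card α) :
    ∃ B' : Finset α, #B' = #B ∧ #(B ∪ B') ≤ #B + d ∧ #(A ∩ B') ≤ #(A ∩ B) - d := by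
  set m := min d #(A ∩ B)
  obtain ⟨X, hXAB, hX⟩ := exists_subset_card_eq (s := A ∩ B) (n := m) (min_le_right _ _)
  have hfresh : m ≤ #(A ∪ B)ᶜ := by
    have := card_union_add_card_inter A B
    rw [card_compl]; omega
  obtain ⟨Y, hY, hYc⟩ := exists_subset_card_eq hfresh
  have hXB : X ⊆ B := hXAB.trans inter_subset_right
  have hYA : Disjoint Y A :=
    disjoint_of_subset_left hY (disjoint_compl_left.mono_right subset_union_left)
  have hYB : Disjoint Y B :=
    disjoint_of_subset_left hY (disjoint_compl_left.mono_right subset_union_right)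
  refine ⟨(B \ X) ∪ Y, ?_, ?_, ?_⟩
  · rw [card_union_of_disjoint (disjoint_of_subset_left sdiff_subset hYB.symm),
      card_sdiff_of_subset hXB, hX, hYc]
    have := card_le_card hXB
    omega
  · calc #(B ∪ ((B \ X) ∪ Y)) ≤ #(B ∪ Y) := card_le_card fun x hx => by
          simp only [mem_union, mem_sdiff] at hx ⊢; tauto
      _ ≤ #B + d := (card_union_le _ _).trans (by omega)
  · calc #(A ∩ ((B \ X) ∪ Y)) ≤ #((A ∩ B) \ X) := card_le_card fun x hx => by
          have hxY : x ∉ Y := fun hxY => disjoint_left.1 hYA hxY (mem_inter.1 hx).1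
          simp only [mem_inter, mem_union, mem_sdiff] at hx hxY ⊢; tauto
      _ = #(A ∩ B) - d := by rw [card_sdiff_of_subset hXAB, hX]; omega

end FinsetCounting

namespace kneser

variable {n k : ℕ}

lemma adj_iff (hk : 0 < k) {A B : {A : Finset (Fin n) // A.card = k}} :
    (kneser n k).Adj A B ↔ Disjoint A.1 B.1 := by
  refine ⟨And.right, fun hAB => ⟨?_, hAB⟩⟩
  rintro rfl
  rw [disjoint_self, bot_eq_empty] at hAB
  have := A.2
  rw [hAB, card_empty] at this
  omega

lemma card_inter_lt_of_ne {A B : {A : Finset (Fin n) // A.card = k}} (hAB : A ≠ B) :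
    #(A.1 ∩ B.1) < k := by
  refine lt_of_le_of_ne ((card_le_card inter_subset_left).trans_eq A.2) fun hk => hAB ?_
  have hA : A.1 ∩ B.1 = A.1 := eq_of_subset_of_card_le inter_subset_left (by rw [hk, A.2])
  have hB : A.1 ∩ B.1 = B.1 := eq_of_subset_of_card_le inter_subset_right (by rw [hk, B.2])
  exact Subtype.ext (hA.symm.trans hB)

lemma exists_adj_adj (hk : 0 < k) {E F : {A : Finset (Fin n) // A.card = k}}
    (h : #(E.1 ∪ F.1) + k ≤ n) : ∃ O, (kneser n k).Adj E O ∧ (kneser n k).Adj O F := by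
  obtain ⟨O, hO, hOEF⟩ := exists_card_eq_disjoint (by rwa [Fintype.card_fin])
  refine ⟨⟨O, hO⟩, (adj_iff hk).2 ?_, (adj_iff hk).2 ?_⟩
  · exact (hOEF.mono_right subset_union_left).symm
  · exact hOEF.mono_right subset_union_right

lemma le_card_inter_add_of_mem_nbhd {A B : {A : Finset (Fin n) // A.card = k}} {i : ℕ}
    (hB : B ∈ nbhd (kneser n k) (2 * i) A) : k ≤ #(A.1 ∩ B.1) + i * (n - 2 * k) := by
  induction i generalizing B with
  | zero =>
    obtain rfl : B = A := hB
    simp [B.2]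
  | succ i ih =>
    obtain ⟨C, ⟨D, hD, hDC⟩, hCB⟩ := hB
    have hcount := card_sdiff_add_card_add_card_le hCB.2.symm hDC.2
    rw [Fintype.card_fin, B.2, C.2] at hcount
    have := card_inter_le_card_inter_add_card_sdiff A.1 B.1 D.1
    have := ih hD
    rw [add_mul]
    omega

lemma self_notMem_nbhd {r : ℕ} (hr : (n - 2 * k) * r < k)
    (A : {A : Finset (Fin n) // A.card = k}) :
    A ∉ nbhd (kneser n k) (2 * r + 1) A := by
  rintro ⟨C, hC, hCA⟩
  have hAC : A.1 ∩ C.1 = ∅ := disjoint_iff_inter_eq_empty.1 hCA.2.symm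
  have := le_card_inter_add_of_mem_nbhd hC
  rw [hAC, card_empty, mul_comm] at this
  omega

lemma mem_nbhd_of_card_inter_le (hk : 0 < k) (hn : 2 * k ≤ n)
    (A B : {A : Finset (Fin n) // A.card = k}) (i : ℕ) (hB : #(A.1 ∩ B.1) ≤ i * (n - 2 * k)) :
    B ∈ nbhd (kneser n k) (2 * i + 1) A := by
  induction i generalizing B with
  | zero =>
    exact ⟨A, rfl, (adj_iff hk).2 (disjoint_iff_inter_eq_empty.2 (card_eq_zero.1 (by omega)))⟩
  | succ i ih =>
    obtain ⟨B', hB'card, hBB', hAB'⟩ :=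
      exists_card_inter_le_sub (A := A.1) (B := B.1) (d := n - 2 * k)
        (by rw [A.2, B.2, Fintype.card_fin]; omega)
    rw [B.2] at hB'card hBB'
    obtain ⟨O, hB'O, hOB⟩ := exists_adj_adj (E := ⟨B', hB'card⟩) (F := B) hk
      (show #(B' ∪ B.1) + k ≤ n by rw [union_comm]; omega)
    have hB'mem := ih ⟨B', hB'card⟩ (by rw [add_mul] at hB; dsimp only; omega)
    exact ⟨O, ⟨⟨B', hB'card⟩, hB'mem, hB'O⟩, hOB⟩

end kneser

/-- If `n > 2k` and `k - 1 = (n-2k)r` then `N_{2r+1}(A) = V(K_{n,k}) \ {A}` for every vertex `A`. -/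
theorem stmt_2 (n k r : ℕ) (hk : 0 < k) (h : 2 * k < n) (hr : k - 1 = (n - 2 * k) * r)
    (A : {A : Finset (Fin n) // A.card = k}) :
    nbhd (kneser n k) (2 * r + 1) A = {B | B ≠ A} := by
  ext B
  refine ⟨fun hB hBA => kneser.self_notMem_nbhd (by omega) A (hBA ▸ hB), fun hBA => ?_⟩
  refine kneser.mem_nbhd_of_card_inter_le hk h.le A B r ?_
  have := kneser.card_inter_lt_of_ne (Ne.symm hBA)
  rw [mul_comm] at hr
  omega
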